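/- Every graph homomorphism a from the box F_n = {−n,…,n}^d (with the induced Cayley graph structure of Z^d) to a finite graph H extends to a graph homomorphism â from F_{2nd} to H such that â restricted to F_n equals a, and the restriction of â to the boundary F_{2nd} \ F_{2nd−1} takes at most two values w₀, w₁ (with (w₀,w₁) an edge of H), determined by the parity of the coordinate sum. -/

import Mathlib

/-- Adjacency in the standard Cayley graph of `ℤ^d`: ℓ¹-distance one. -/
def adjZ {d : ℕ} (i j : Fin d → ℤ) : Prop := (∑ t, |i t - j t|) = 1

/-- The box `F_n = {−n,…,n}^d`. -/
def boxF {d : ℕ} (n : ℕ) : Set (Fin d → ℤ) := {i | ∀ t, |i t| ≤ (n : ℤ)}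

/-!
Clip `x` coordinatewise into `F_n` to get `c`, and let `k = ‖x - c‖₁` be the overshoot. The map
`descend` is a graph endomorphism of `ℤ^d` sending every point to a neighbour: it moves the first
nonzero coordinate one step towards `0`, and at `0` it bounces to a unit vector. Put
`Ψ x = descend^[k] c`. Along an edge of `ℤ^d` either `c` moves along an edge while `k` stays fixed,
or `c` stays fixed while `k` changes by one, so `Ψ` preserves edges; it fixes `F_n` and maps into
`F_n`. On the boundary of `F_{2nd}` the overshoot exceeds `‖c‖₁`, so `c` has already descended to
`0` and `Ψ x` is `0` or `descend 0` according to the parity of `k - ‖c‖₁`, which is that of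
`∑ x_t`. The extension is `a ∘ Ψ`.
-/

open Finset

def l1Norm {d : ℕ} (z : Fin d → ℤ) : ℕ := ∑ t, (z t).natAbs

lemma l1Norm_eq_zero {d : ℕ} {z : Fin d → ℤ} : l1Norm z = 0 ↔ z = 0 := by
  simp [l1Norm, funext_iff]

lemma l1Norm_cons {m : ℕ} (a : ℤ) (w : Fin m → ℤ) :
    l1Norm (Fin.cons a w : Fin (m + 1) → ℤ) = a.natAbs + l1Norm w := by
  simp [l1Norm, Fin.sum_univ_succ]

lemma adjZ_comm {d : ℕ} {x y : Fin d → ℤ} : adjZ x y ↔ adjZ y x := by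
  simp only [adjZ, abs_sub_comm]

lemma adjZ_cons_iff {m : ℕ} {a a' : ℤ} {w w' : Fin m → ℤ} :
    adjZ (Fin.cons a w : Fin (m + 1) → ℤ) (Fin.cons a' w') ↔
      (|a - a'| = 1 ∧ w = w') ∨ (a = a' ∧ adjZ w w') := by
  have hw : ∑ t, |w t - w' t| = 0 ↔ w = w' := by
    rw [sum_eq_zero_iff_of_nonneg fun _ _ => abs_nonneg _]
    simp [funext_iff, sub_eq_zero]
  have hw0 : 0 ≤ ∑ t, |w t - w' t| := sum_nonneg fun _ _ => abs_nonneg _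
  have ha : |a - a'| = 0 ↔ a = a' := by rw [abs_eq_zero, sub_eq_zero]
  have ha0 := abs_nonneg (a - a')
  simp only [adjZ, Fin.sum_univ_succ, Fin.cons_zero, Fin.cons_succ]
  rw [← hw, ← ha]
  omega

lemma mem_boxF_cons {m n : ℕ} {a : ℤ} {w : Fin m → ℤ} :
    (Fin.cons a w : Fin (m + 1) → ℤ) ∈ boxF n ↔ |a| ≤ n ∧ w ∈ boxF n := by
  simp [boxF, Fin.forall_fin_succ]

def bounce (a : ℤ) : ℤ := if 0 < a then a - 1 else if a < 0 then a + 1 else 1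

lemma abs_bounce_sub (a : ℤ) : |bounce a - a| = 1 := by
  rw [abs_eq zero_le_one]
  unfold bounce; split_ifs <;> omega

lemma abs_bounce_sub_bounce {a a' : ℤ} (h : |a - a'| = 1) : |bounce a - bounce a'| = 1 := by
  rw [abs_eq zero_le_one] at h ⊢
  unfold bounce; split_ifs <;> omega

lemma natAbs_bounce {a : ℤ} (h : a ≠ 0) : (bounce a).natAbs + 1 = a.natAbs := by
  unfold bounce; split_ifs <;> omega

lemma bounce_eq_zero_of_abs_eq_one {a : ℤ} (h : |a| = 1) : bounce a = 0 := by
  rw [abs_eq zero_le_one] at h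
  unfold bounce; split_ifs <;> omega

lemma abs_bounce_le {a : ℤ} {n : ℕ} (h : |a| ≤ n) (hn : 0 < n) : |bounce a| ≤ n := by
  rw [abs_le] at h ⊢
  unfold bounce; split_ifs <;> omega

def descend : {m : ℕ} → (Fin (m + 1) → ℤ) → Fin (m + 1) → ℤ
  | 0, z => fun _ => bounce (z 0)
  | _ + 1, z =>
    if z 0 = 0 then Fin.cons 0 (descend (Fin.tail z)) else Fin.cons (bounce (z 0)) (Fin.tail z)

lemma descend_cons {m : ℕ} (a : ℤ) (w : Fin (m + 1) → ℤ) :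
    descend (Fin.cons a w) = if a = 0 then Fin.cons 0 (descend w) else Fin.cons (bounce a) w := by
  simp [descend]

lemma adjZ_descend_self {m : ℕ} (z : Fin (m + 1) → ℤ) : adjZ (descend z) z := by
  induction m with
  | zero => simpa [adjZ, descend] using abs_bounce_sub (z 0)
  | succ m ih =>
    induction z using Fin.consCases with
    | cons a w =>
      rw [descend_cons]
      split_ifs with ha <;> rw [adjZ_cons_iff]
      · exact .inr ⟨ha.symm, ih w⟩
      · exact .inl ⟨abs_bounce_sub a, rfl⟩

lemma adjZ_descend {m : ℕ} {y y' : Fin (m + 1) → ℤ} (h : adjZ y y') :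
    adjZ (descend y) (descend y') := by
  induction m with
  | zero => simpa [adjZ, descend] using abs_bounce_sub_bounce (by simpa [adjZ] using h)
  | succ m ih =>
    induction y using Fin.consCases with
    | cons a w =>
    induction y' using Fin.consCases with
    | cons a' w' =>
      rw [adjZ_cons_iff] at h
      rw [descend_cons, descend_cons]
      rcases h with ⟨haa', rfl⟩ | ⟨rfl, hww'⟩
      · by_cases ha : a = 0
        · have hb : bounce a' = 0 := by
            rw [ha, zero_sub, abs_neg] at haa'
            exact bounce_eq_zero_of_abs_eq_one haa'
          rw [if_pos ha, if_neg (by rintro rfl; simp [ha] at haa'), hb, adjZ_cons_iff]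
          exact .inr ⟨rfl, adjZ_descend_self w⟩
        by_cases ha' : a' = 0
        · have hb : bounce a = 0 := by
            rw [ha', sub_zero] at haa'
            exact bounce_eq_zero_of_abs_eq_one haa'
          rw [if_neg ha, if_pos ha', hb, adjZ_cons_iff]
          exact .inr ⟨rfl, adjZ_comm.mp (adjZ_descend_self w)⟩
        rw [if_neg ha, if_neg ha', adjZ_cons_iff]
        exact .inl ⟨abs_bounce_sub_bounce haa', rfl⟩
      · split_ifs <;> rw [adjZ_cons_iff]
        · exact .inr ⟨rfl, ih hww'⟩
        · exact .inr ⟨rfl, hww'⟩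

lemma l1Norm_descend {m : ℕ} {z : Fin (m + 1) → ℤ} (hz : z ≠ 0) :
    l1Norm (descend z) + 1 = l1Norm z := by
  induction m with
  | zero =>
    have : z 0 ≠ 0 := fun h => hz (funext (Fin.forall_fin_one.mpr h))
    simpa [l1Norm, descend] using natAbs_bounce this
  | succ m ih =>
    induction z using Fin.consCases with
    | cons a w =>
      rw [descend_cons, l1Norm_cons]
      split_ifs with ha
      · subst ha
        have hw : w ≠ 0 := by rintro rfl; exact hz (Fin.cons_self_tail 0)
        rw [l1Norm_cons, ← ih hw]; simp
      · rw [l1Norm_cons, ← natAbs_bounce ha]; ring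

lemma descend_mem_boxF {m n : ℕ} (hn : 0 < n) {z : Fin (m + 1) → ℤ} (hz : z ∈ boxF n) :
    descend z ∈ boxF n := by
  induction m with
  | zero => exact fun _ => abs_bounce_le (hz 0) hn
  | succ m ih =>
    induction z using Fin.consCases with
    | cons a w =>
      rw [mem_boxF_cons] at hz
      rw [descend_cons]
      split_ifs
      · exact mem_boxF_cons.mpr ⟨by simp, ih hz.2⟩
      · exact mem_boxF_cons.mpr ⟨abs_bounce_le hz.1 hn, hz.2⟩

lemma descend_descend_zero {m : ℕ} : descend (descend (0 : Fin (m + 1) → ℤ)) = 0 := by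
  induction m with
  | zero => funext; simp [descend, bounce]
  | succ m ih =>
    rw [← Fin.cons_self_tail 0]
    simp only [Pi.zero_apply, descend_cons, if_pos]
    exact congrArg (Fin.cons 0) ih

lemma descend_iterate_l1Norm {m : ℕ} (z : Fin (m + 1) → ℤ) : descend^[l1Norm z] z = 0 := by
  induction h : l1Norm z generalizing z with
  | zero => simpa using l1Norm_eq_zero.mp h
  | succ k ih =>
    have hz : z ≠ 0 := by rintro rfl; simp [l1Norm] at h
    rw [Function.iterate_succ_apply, ih]
    have := l1Norm_descend hz
    omega

lemma descend_iterate_zero {m : ℕ} (j : ℕ) :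
    descend^[j] (0 : Fin (m + 1) → ℤ) = if Even j then 0 else descend 0 := by
  induction j with
  | zero => simp
  | succ j ih =>
    rw [Function.iterate_succ_apply', ih]
    by_cases hj : Even j
    · simp [hj, Nat.even_add_one]
    · simp [hj, Nat.even_add_one, descend_descend_zero]

lemma descend_iterate_of_l1Norm_le {m k : ℕ} {z : Fin (m + 1) → ℤ} (h : l1Norm z ≤ k) :
    descend^[k] z = if Even (k - l1Norm z) then 0 else descend 0 := by
  rw [← Nat.sub_add_cancel h, Function.iterate_add_apply, descend_iterate_l1Norm,
    descend_iterate_zero, Nat.add_sub_cancel]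

lemma adjZ_iterate_descend {m : ℕ} (k : ℕ) {y y' : Fin (m + 1) → ℤ} (h : adjZ y y') :
    adjZ (descend^[k] y) (descend^[k] y') := by
  induction k with
  | zero => exact h
  | succ k ih =>
    rw [Function.iterate_succ_apply', Function.iterate_succ_apply']
    exact adjZ_descend ih

lemma adjZ_iff_exists_coord {d : ℕ} {x y : Fin d → ℤ} :
    adjZ x y ↔ ∃ s, |x s - y s| = 1 ∧ ∀ t ≠ s, x t = y t := by
  constructor
  · intro h
    obtain ⟨s, hs⟩ : ∃ s, x s ≠ y s := by
      by_contra! hxy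
      simp [adjZ, hxy] at h
    have hsplit := add_sum_erase univ (fun t => |x t - y t|) (mem_univ s)
    have hrest : 0 ≤ ∑ t ∈ univ.erase s, |x t - y t| := sum_nonneg fun _ _ => abs_nonneg _
    have hs1 : 1 ≤ |x s - y s| := Int.one_le_abs (sub_ne_zero.mpr hs)
    rw [adjZ] at h
    have hrest0 : ∑ t ∈ univ.erase s, |x t - y t| = 0 := by omega
    refine ⟨s, by omega, fun t ht => ?_⟩
    have h0 := (sum_eq_zero_iff_of_nonneg fun _ _ => abs_nonneg _).mp hrest0 t
      (mem_erase.mpr ⟨ht, mem_univ t⟩)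
    rwa [abs_eq_zero, sub_eq_zero] at h0
  · rintro ⟨s, hs, hxy⟩
    rw [adjZ, sum_eq_single s (fun t _ ht => by simp [hxy t ht]) (by simp), hs]

def clip (n : ℕ) (a : ℤ) : ℤ := max (-n) (min n a)

def overshoot (n : ℕ) (a : ℤ) : ℕ := (a - clip n a).natAbs

lemma clip_of_abs_le {n : ℕ} {a : ℤ} (h : |a| ≤ n) : clip n a = a := by
  rw [abs_le] at h; unfold clip; omega

lemma abs_clip_le (n : ℕ) (a : ℤ) : |clip n a| ≤ n := by
  rw [abs_le]; unfold clip; omega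

lemma natAbs_clip_add_overshoot (n : ℕ) (a : ℤ) :
    (clip n a).natAbs + overshoot n a = a.natAbs := by
  unfold overshoot clip; omega

lemma le_overshoot (n : ℕ) (a : ℤ) : |a| - n ≤ overshoot n a := by
  unfold overshoot clip; rw [abs_eq_max_neg]; omega

lemma clip_overshoot_of_abs_sub_eq_one {n : ℕ} {a a' : ℤ} (h : |a - a'| = 1) :
    (clip n a = clip n a' ∧
        (overshoot n a' = overshoot n a + 1 ∨ overshoot n a = overshoot n a' + 1)) ∨
      (overshoot n a = overshoot n a' ∧ |clip n a - clip n a'| = 1) := by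
  rw [abs_eq zero_le_one] at h
  rw [abs_eq zero_le_one]
  unfold overshoot clip; omega

def boxClip {d : ℕ} (n : ℕ) (x : Fin d → ℤ) : Fin d → ℤ := fun t => clip n (x t)

def boxOvershoot {d : ℕ} (n : ℕ) (x : Fin d → ℤ) : ℕ := ∑ t, overshoot n (x t)

lemma boxClip_boxOvershoot_of_adjZ {d n : ℕ} {x y : Fin d → ℤ} (h : adjZ x y) :
    (boxClip n x = boxClip n y ∧
        (boxOvershoot n y = boxOvershoot n x + 1 ∨ boxOvershoot n x = boxOvershoot n y + 1)) ∨
      (boxOvershoot n x = boxOvershoot n y ∧ adjZ (boxClip n x) (boxClip n y)) := by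
  obtain ⟨s, hs, hxy⟩ := adjZ_iff_exists_coord.mp h
  have hclip : ∀ t ≠ s, boxClip n x t = boxClip n y t := fun t ht => by simp [boxClip, hxy t ht]
  have hover : boxOvershoot n x + overshoot n (y s) = boxOvershoot n y + overshoot n (x s) := by
    simp only [boxOvershoot, ← add_sum_erase univ _ (mem_univ s)]
    rw [sum_congr rfl fun t ht => by rw [hxy t (ne_of_mem_erase ht)]]
    ring
  rcases clip_overshoot_of_abs_sub_eq_one (n := n) hs with ⟨hc, ho⟩ | ⟨ho, hc⟩
  · refine .inl ⟨funext fun t => ?_, by omega⟩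
    by_cases ht : t = s
    · subst ht; exact hc
    · exact hclip t ht
  · exact .inr ⟨by omega, adjZ_iff_exists_coord.mpr ⟨s, hc, hclip⟩⟩

lemma even_sum_natAbs_iff {d : ℕ} (x : Fin d → ℤ) :
    Even (∑ t, (x t).natAbs) ↔ (∑ t, x t) % 2 = 0 := by
  rw [← Int.even_coe_nat, Int.even_iff, Nat.cast_sum, sum_int_mod, sum_int_mod univ 2 x]
  simp only [Int.natCast_natAbs]
  rw [sum_congr rfl fun t _ => show |x t| % 2 = x t % 2 by rw [abs_eq_max_neg]; omega]

def boxFold (n : ℕ) {m : ℕ} (x : Fin (m + 1) → ℤ) : Fin (m + 1) → ℤ :=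
  descend^[boxOvershoot n x] (boxClip n x)

lemma adjZ_boxFold {m n : ℕ} {x y : Fin (m + 1) → ℤ} (h : adjZ x y) :
    adjZ (boxFold n x) (boxFold n y) := by
  unfold boxFold
  rcases boxClip_boxOvershoot_of_adjZ (n := n) h with ⟨hc, ho | ho⟩ | ⟨ho, hc⟩
  · rw [hc, ho, Function.iterate_succ_apply']
    exact adjZ_comm.mp (adjZ_descend_self _)
  · rw [hc, ho, Function.iterate_succ_apply']
    exact adjZ_descend_self _
  · rw [ho]
    exact adjZ_iterate_descend _ hc

lemma boxFold_mem_boxF {m n : ℕ} (hn : 0 < n) (x : Fin (m + 1) → ℤ) : boxFold n x ∈ boxF n := by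
  unfold boxFold
  induction boxOvershoot n x with
  | zero => exact fun t => abs_clip_le n (x t)
  | succ k ih =>
    rw [Function.iterate_succ_apply']
    exact descend_mem_boxF hn ih

lemma boxFold_of_mem_boxF {m n : ℕ} {x : Fin (m + 1) → ℤ} (hx : x ∈ boxF n) :
    boxFold n x = x := by
  have hclip : boxClip n x = x := funext fun t => clip_of_abs_le (hx t)
  have hover : boxOvershoot n x = 0 :=
    sum_eq_zero fun t _ => by simp [overshoot, clip_of_abs_le (hx t)]
  rw [boxFold, hover, hclip, Function.iterate_zero_apply]

lemma boxFold_of_le_abs {m n : ℕ} {x : Fin (m + 1) → ℤ} {s : Fin (m + 1)}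
    (hs : n * (m + 2) ≤ |x s|) :
    boxFold n x = if (∑ t, x t) % 2 = 0 then 0 else descend 0 := by
  have hclip : l1Norm (boxClip n x) ≤ n * (m + 1) := by
    calc l1Norm (boxClip n x) ≤ ∑ _t : Fin (m + 1), n :=
          sum_le_sum fun t _ => by
            have := abs_clip_le n (x t); rw [abs_eq_max_neg] at this; simp only [boxClip]; omega
      _ = n * (m + 1) := by simp [mul_comm]
  have hover : n * (m + 1) ≤ boxOvershoot n x := by
    refine le_trans ?_ (single_le_sum (fun t _ => Nat.zero_le (overshoot n (x t))) (mem_univ s))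
    have := le_overshoot n (x s)
    zify
    linarith
  have hpar : Even (boxOvershoot n x - l1Norm (boxClip n x)) ↔ (∑ t, x t) % 2 = 0 := by
    rw [Nat.even_sub (hclip.trans hover), ← Nat.even_add, ← even_sum_natAbs_iff, boxOvershoot,
      l1Norm, ← sum_add_distrib]
    simp only [boxClip, add_comm (overshoot n _), natAbs_clip_add_overshoot]
  rw [boxFold, descend_iterate_of_l1Norm_le (hclip.trans hover)]
  exact if_congr hpar rfl rfl

lemma exists_le_abs_of_not_mem_boxF {d R : ℕ} {x : Fin d → ℤ} (hx : x ∉ boxF (R - 1)) :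
    ∃ s, (R : ℤ) ≤ |x s| := by
  by_contra! h
  exact hx fun t => by have := h t; omega

theorem stmt8_general {V : Type*} (Adj : V → V → Prop)
    (d n : ℕ) (hd : 0 < d) (hn : 0 < n)
    (a : (Fin d → ℤ) → V)
    (ha : ∀ i ∈ boxF n, ∀ j ∈ boxF n, adjZ i j → Adj (a i) (a j)) :
    ∃ b : (Fin d → ℤ) → V,
      (∀ i ∈ boxF (2 * n * d), ∀ j ∈ boxF (2 * n * d), adjZ i j → Adj (b i) (b j)) ∧
      (∀ i ∈ boxF n, b i = a i) ∧
      ∃ w₀ w₁ : V, Adj w₀ w₁ ∧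
        ∀ i ∈ boxF (d := d) (2 * n * d) \ boxF (2 * n * d - 1),
          b i = if (∑ t, i t) % 2 = 0 then w₀ else w₁ := by
  obtain ⟨m, rfl⟩ : ∃ m, d = m + 1 := Nat.exists_eq_add_one.mpr hd
  have hzero : (0 : Fin (m + 1) → ℤ) ∈ boxF n := fun _ => by simp
  refine ⟨a ∘ boxFold n, fun i _ j _ hij => ?_, fun i hi => congrArg a (boxFold_of_mem_boxF hi),
    a 0, a (descend 0), ?_, fun i hi => ?_⟩
  · exact ha _ (boxFold_mem_boxF hn i) _ (boxFold_mem_boxF hn j) (adjZ_boxFold hij)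
  · exact ha _ hzero _ (descend_mem_boxF hn hzero) (adjZ_comm.mp (adjZ_descend_self 0))
  · obtain ⟨s, hs⟩ := exists_le_abs_of_not_mem_boxF hi.2
    have hR : (n : ℤ) * (m + 2) ≤ ((2 * n * (m + 1) : ℕ) : ℤ) := by push_cast; nlinarith
    rw [Function.comp_apply, boxFold_of_le_abs (hR.trans hs), apply_ite a]

theorem stmt8 {V : Type*} [Fintype V] (Adj : V → V → Prop)
    (hsymm : ∀ u v, Adj u v → Adj v u)
    (d n : ℕ) (hd : 0 < d) (hn : 0 < n)
    (a : (Fin d → ℤ) → V)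
    (ha : ∀ i ∈ boxF n, ∀ j ∈ boxF n, adjZ i j → Adj (a i) (a j)) :
    ∃ b : (Fin d → ℤ) → V,
      (∀ i ∈ boxF (2 * n * d), ∀ j ∈ boxF (2 * n * d), adjZ i j → Adj (b i) (b j)) ∧
      (∀ i ∈ boxF n, b i = a i) ∧
      ∃ w₀ w₁ : V, Adj w₀ w₁ ∧
        ∀ i ∈ boxF (d := d) (2 * n * d) \ boxF (2 * n * d - 1),
          b i = if (∑ t, i t) % 2 = 0 then w₀ else w₁ :=
  stmt8_general Adj d n hd hn a ha
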